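/- If information structure S Blackwell-dominates T (i.e., S M = T for some stochastic matrix M), then for every convex function h : Δ(Θ) → ℝ and every belief μ, the expected value of h at the posterior under S is at least that under T: Σ_s α_s(μ) h(μ_S(s)) ≥ Σ_t β_t(μ) h(μ_T(t)). -/

import Mathlib

/-!
The posterior after the garbled signal `t` is the average of the posteriors after the signals `s`,
weighted by the joint probabilities `α_s M_{s,t}`. Jensen's inequality at each `t`, multiplied by
`β_t = ∑_s α_s M_{s,t}`, and summed over `t` gives the claim, since the rows of `M` sum to one.
-/

open Finset

noncomputable def post {Θ S : Type*} [Fintype Θ] (f : Θ → S → ℝ) (μ : Θ → ℝ) (s : S) :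
    Θ → ℝ :=
  fun θ => μ θ * f θ s / (∑ θ', μ θ' * f θ' s)

noncomputable def Eexp {Θ S : Type*} [Fintype Θ] [Fintype S] (f : Θ → S → ℝ)
    (V : (Θ → ℝ) → ℝ) (μ : Θ → ℝ) : ℝ :=
  ∑ s, (∑ θ, μ θ * f θ s) * V (post f μ s)

theorem ConvexOn.sum_mul_map_centerMass_le {E ι : Type*} [AddCommGroup E] [Module ℝ E]
    {C : Set E} {φ : E → ℝ} (hφ : ConvexOn ℝ C φ) (t : Finset ι) {w : ι → ℝ} {p : ι → E}
    (hw : ∀ i ∈ t, 0 ≤ w i) (hp : ∀ i ∈ t, w i ≠ 0 → p i ∈ C) :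
    (∑ i ∈ t, w i) * φ (t.centerMass w p) ≤ ∑ i ∈ t, w i * φ (p i) := by
  classical
  rcases (sum_nonneg hw).eq_or_lt with hzero | hpos
  · have hw0 : ∀ i ∈ t, w i = 0 := (sum_eq_zero_iff_of_nonneg hw).mp hzero.symm
    rw [← hzero, zero_mul, sum_eq_zero fun i hi => by rw [hw0 i hi, zero_mul]]
  have hjensen := hφ.map_centerMass_le (t := {i ∈ t | w i ≠ 0})
    (fun i hi => hw i (mem_filter.mp hi).1) (by rwa [sum_filter_ne_zero])
    (fun i hi => hp i (mem_filter.mp hi).1 (mem_filter.mp hi).2)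
  simp only [centerMass_filter_ne_zero] at hjensen
  calc (∑ i ∈ t, w i) * φ (t.centerMass w p)
      ≤ (∑ i ∈ t, w i) * t.centerMass w (φ ∘ p) := mul_le_mul_of_nonneg_left hjensen hpos.le
    _ = ∑ i ∈ t, w i * φ (p i) := by
        rw [centerMass, smul_eq_mul, mul_inv_cancel_left₀ hpos.ne']
        rfl

section Posterior

variable {Θ S T : Type*} [Fintype Θ]

theorem post_mem_stdSimplex {f : Θ → S → ℝ} {μ : Θ → ℝ} {s : S} (hμ : ∀ θ, 0 ≤ μ θ)
    (hf : ∀ θ, 0 ≤ f θ s) (hs : ∑ θ, μ θ * f θ s ≠ 0) : post f μ s ∈ stdSimplex ℝ Θ :=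
  ⟨fun θ => div_nonneg (mul_nonneg (hμ θ) (hf θ)) (sum_nonneg fun θ _ => mul_nonneg (hμ θ) (hf θ)),
    by simp only [post, ← sum_div, div_self hs]⟩

theorem sum_mul_smul_post {f : Θ → S → ℝ} {μ : Θ → ℝ} {s : S} (hμ : ∀ θ, 0 ≤ μ θ)
    (hf : ∀ θ, 0 ≤ f θ s) : (∑ θ, μ θ * f θ s) • post f μ s = fun θ => μ θ * f θ s := by
  funext θ
  by_cases hs : ∑ θ, μ θ * f θ s = 0
  · have := (sum_eq_zero_iff_of_nonneg fun θ _ => mul_nonneg (hμ θ) (hf θ)).mp hs θ (mem_univ θ)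
    simp [hs, this]
  · simp [post, mul_div_cancel₀ _ hs]

variable [Fintype S] {f : Θ → S → ℝ} {g : Θ → T → ℝ} {M : S → T → ℝ}

theorem sum_mul_garble (hgarble : ∀ θ t, g θ t = ∑ s, f θ s * M s t) (μ : Θ → ℝ) (t : T) :
    ∑ θ, μ θ * g θ t = ∑ s, (∑ θ, μ θ * f θ s) * M s t := by
  simp_rw [hgarble, mul_sum, sum_mul, mul_assoc]
  exact sum_comm

theorem post_garble_eq_centerMass (hgarble : ∀ θ t, g θ t = ∑ s, f θ s * M s t)
    {μ : Θ → ℝ} (hμ : ∀ θ, 0 ≤ μ θ) (hf : ∀ θ s, 0 ≤ f θ s) (t : T) :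
    post g μ t = univ.centerMass (fun s => (∑ θ, μ θ * f θ s) * M s t) (post f μ) := by
  have hnum : ∑ s, ((∑ θ, μ θ * f θ s) * M s t) • post f μ s = fun θ => μ θ * g θ t := by
    simp_rw [mul_comm _ (M _ t), mul_smul, sum_mul_smul_post hμ (hf · _)]
    funext θ
    simp only [Finset.sum_apply, Pi.smul_apply, smul_eq_mul, hgarble, mul_sum]
    exact sum_congr rfl fun s _ => by ring
  rw [centerMass, ← sum_mul_garble hgarble, hnum]
  funext θ
  simp [post, div_eq_inv_mul]

end Posterior

theorem blackwell_garbling_expected_convex_general {Θ S T : Type*}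
    [Fintype Θ] [Fintype S] [Fintype T]
    (f : Θ → S → ℝ) (hf : ∀ θ s, 0 ≤ f θ s)
    (g : Θ → T → ℝ)
    (M : S → T → ℝ) (hM : ∀ s t, 0 ≤ M s t) (hMsum : ∀ s, ∑ t, M s t = 1)
    (hgarble : ∀ θ t, g θ t = ∑ s, f θ s * M s t)
    (h : (Θ → ℝ) → ℝ) (hconv : ConvexOn ℝ (stdSimplex ℝ Θ) h) :
    ∀ μ ∈ stdSimplex ℝ Θ, Eexp g h μ ≤ Eexp f h μ := by
  intro μ hμ
  set α : S → ℝ := fun s => ∑ θ, μ θ * f θ s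
  have hα : ∀ s, 0 ≤ α s := fun s => sum_nonneg fun θ _ => mul_nonneg (hμ.1 θ) (hf θ s)
  calc Eexp g h μ
      = ∑ t, (∑ s, α s * M s t) * h (univ.centerMass (fun s => α s * M s t) (post f μ)) := by
        simp only [Eexp, sum_mul_garble hgarble, post_garble_eq_centerMass hgarble hμ.1 hf]
        rfl
    _ ≤ ∑ t, ∑ s, α s * M s t * h (post f μ s) :=
        -- a signal of probability zero has the junk posterior `0`, which lies outside the simplex
        sum_le_sum fun t _ => hconv.sum_mul_map_centerMass_le univ
          (fun s _ => mul_nonneg (hα s) (hM s t))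
          (fun s _ hs => post_mem_stdSimplex hμ.1 (hf · s) (left_ne_zero_of_mul hs))
    _ = Eexp f h μ := by
        rw [sum_comm]
        simp_rw [mul_right_comm _ _ (h _), ← mul_sum, hMsum, mul_one]
        rfl

/-- one direction of Blackwell's theorem: if information structure `S`
(matrix `f`) Blackwell-dominates `T` (matrix `g`), i.e. `g = f M` for a row-stochastic
matrix `M`, then for every convex function `h` on the simplex and every belief `μ`, the
expected value of `h` at the posterior under `S` is at least that under `T`. -/
theorem blackwell_garbling_expected_convex {Θ S T : Type*}
    [Fintype Θ] [Fintype S] [Fintype T]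
    (f : Θ → S → ℝ) (hf : ∀ θ s, 0 ≤ f θ s) (hfsum : ∀ θ, ∑ s, f θ s = 1)
    (g : Θ → T → ℝ)
    (M : S → T → ℝ) (hM : ∀ s t, 0 ≤ M s t) (hMsum : ∀ s, ∑ t, M s t = 1)
    (hgarble : ∀ θ t, g θ t = ∑ s, f θ s * M s t)
    (h : (Θ → ℝ) → ℝ) (hconv : ConvexOn ℝ (stdSimplex ℝ Θ) h) :
    ∀ μ ∈ stdSimplex ℝ Θ, Eexp g h μ ≤ Eexp f h μ :=
  blackwell_garbling_expected_convex_general f hf g M hM hMsum hgarble h hconv
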